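/- arXiv:math/0601683 — 4 statements merged into one kernel-verified Lean document; each statement's English description precedes it below -/
import Mathlib

section
/- Let q, k, n, a be positive integers with 1 ≤ q ≤ k - 1, k < n, and suppose ka > n - k + k²/n. Then for every real r satisfying r² + (q(a+1) - n)r - q(k-q) ≤ 0, one has r < n - qn/k. -/
/-- if 1 ≤ q ≤ k-1, k < n and ka > n - k + k²/n, then every real r with
r² + (q(a+1)-n)r - q(k-q) ≤ 0 satisfies r < n - qn/k. -/
theorem stmt_2 (q k n a : ℤ) (hq : 1 ≤ q) (hqk : q ≤ k - 1) (hkn : k < n) (ha : 0 < a)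
    (hka : (n : ℚ) - k + (k : ℚ) ^ 2 / n < (k : ℚ) * a) :
    ∀ r : ℝ, r ^ 2 + ((q : ℝ) * (a + 1) - n) * r - q * (k - q) ≤ 0 →
      r < (n : ℝ) - q * n / k := by
  have hk2 : (2:ℤ) ≤ k := by linarith
  have hnZ : (0:ℤ) < n := by linarith
  have hnQ : (0:ℚ) < n := by exact_mod_cast hnZ
  have hZ : (n:ℤ)^2 - k*n + k^2 < k*a*n := by
    have h1 : (k:ℚ)^2/n * n = (k:ℚ)^2 := div_mul_cancel₀ _ (ne_of_gt hnQ)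
    have h2 := mul_lt_mul_of_pos_right hka hnQ
    have : (n:ℚ)^2 - k*n + k^2 < k*a*n := by nlinarith
    exact_mod_cast this
  -- real versions
  have hkR : (0:ℝ) < (k:ℝ) := by exact_mod_cast (by linarith : (0:ℤ) < k)
  have hnR : (0:ℝ) < (n:ℝ) := by exact_mod_cast hnZ
  have hqR : (1:ℝ) ≤ (q:ℝ) := by exact_mod_cast hq
  have hqkR : (q:ℝ) ≤ (k:ℝ) - 1 := by exact_mod_cast hqk
  have hknR : (k:ℝ) < (n:ℝ) := by exact_mod_cast hkn
  have hZR : ((n:ℝ))^2 - k*n + k^2 < k*a*n := by exact_mod_cast hZ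
  have hkne : ((k:ℝ)) ≠ 0 := ne_of_gt hkR
  intro r hr
  by_contra hcon
  push_neg at hcon
  set R : ℝ := (n:ℝ) - q * n / k with hR
  -- f(R) > 0
  have hfR : 0 < R ^ 2 + ((q:ℝ) * (a + 1) - n) * R - q * (k - q) := by
    rw [hR]
    have hrw : ((n:ℝ) - q * n / k) = n * (k - q) / k := by field_simp
    rw [hrw, div_pow]
    have key : 0 < ((n:ℝ) * (k - q))^2 + (((q:ℝ) * (a + 1) - n) * (n * (k - q)) - q * (k - q) * k) * k := by
      nlinarith [mul_lt_mul_of_pos_left hZR (by linarith : (0:ℝ) < (q:ℝ)),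
        mul_pos (mul_pos hnR hkR) (by linarith : (0:ℝ) < (n:ℝ) - k),
        (by linarith : (0:ℝ) < (k:ℝ) - q)]
    have : ((n:ℝ) * (k - q))^2 / k^2 + ((q:ℝ) * (a + 1) - n) * (n * (k - q) / k) - q * (k - q)
        = (((n:ℝ) * (k - q))^2 + (((q:ℝ) * (a + 1) - n) * (n * (k - q)) - q * (k - q) * k) * k) / k^2 := by
      field_simp; ring
    rw [this]
    positivity
  -- vertex: 0 < 2R + b
  have hvert : 0 < 2 * R + ((q:ℝ) * (a + 1) - n) := by
    rw [hR]
    have h1 : (q:ℝ) * n / k < n := by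
      rw [div_lt_iff₀ hkR]; nlinarith
    have h2 : (q:ℝ) * (a+1) > q * n / k + q * k / n := by
      rw [gt_iff_lt, div_add_div _ _ hkne (ne_of_gt hnR), div_lt_iff₀ (mul_pos hkR hnR)]
      nlinarith [(by linarith : (0:ℝ) < (q:ℝ))]
    have h3 : (0:ℝ) < q * k / n := by positivity
    nlinarith
  nlinarith [mul_le_mul_of_nonneg_left hcon (by linarith : (0:ℝ) ≤ r - R + (r + R + ((q:ℝ)*(a+1)-n)))]
end

section
/- Let q, k, n, a be positive integers with 1 ≤ q ≤ k-1 and k < n, and suppose ka = n - k + (k²-1)/n (so in particular n divides k²-1). Then (n - q(a+1))² + 4q(k-q) < (n - qn/k + q(k²-1)/(kn) + 2/k)². -/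
/-!
From `k a = n - k + (k² - 1)/n` one gets `n - q(a + 1) = X - Y` with `X = n - qn/k` and
`Y = q(k² - 1)/(kn)`. Since `XY = q(k - q)(k² - 1)/k²`, the gap
`(X + Y + 2/k)² - (X - Y)² - 4q(k - q)` collapses to `4((n - q)(k - q) + 1 + q(k² - 1)/n)/k²`,
which is positive because `q < k < n`.
-/

section
variable {K : Type*} [Field K]

theorem sub_mul_add_one_eq_of_mul_eq {q k n a : K} (hk : k ≠ 0) (hn : n ≠ 0)
    (hka : k * a = n - k + (k ^ 2 - 1) / n) :
    n - q * (a + 1) = n - q * n / k - q * (k ^ 2 - 1) / (k * n) := by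
  have ha : a = (n - k + (k ^ 2 - 1) / n) / k := by
    rw [eq_div_iff hk]
    linear_combination hka
  rw [ha]
  field_simp
  ring

theorem sq_add_two_div_sub_sq_sub_eq (q k n : K) (hk : k ≠ 0) (hn : n ≠ 0) :
    (n - q * n / k + q * (k ^ 2 - 1) / (k * n) + 2 / k) ^ 2 -
        ((n - q * n / k - q * (k ^ 2 - 1) / (k * n)) ^ 2 + 4 * q * (k - q)) =
      4 * ((n - q) * (k - q) + 1 + q * (k ^ 2 - 1) / n) / k ^ 2 := by
  field_simp
  ring

end

theorem stmt_3_general (q k n a : ℤ) (hq : 1 ≤ q) (hqk : q ≤ k - 1) (hkn : k < n)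
    (hka : (k : ℚ) * a = (n : ℚ) - k + ((k : ℚ) ^ 2 - 1) / n) :
    ((n : ℚ) - q * (a + 1)) ^ 2 + 4 * q * (k - q) <
      ((n : ℚ) - q * n / k + q * ((k : ℚ) ^ 2 - 1) / (k * n) + 2 / k) ^ 2 := by
  have hq : (1 : ℚ) ≤ q := by exact_mod_cast hq
  have hqk : (q : ℚ) < k := by exact_mod_cast (by omega : q < k)
  have hkn : (k : ℚ) < n := by exact_mod_cast hkn
  have hk : (0 : ℚ) < k := by linarith
  have hn : (0 : ℚ) < n := by linarith
  rw [sub_mul_add_one_eq_of_mul_eq hk.ne' hn.ne' hka]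
  have hgap := sq_add_two_div_sub_sq_sub_eq (q : ℚ) k n hk.ne' hn.ne'
  have hgap_pos : 0 < 4 * (((n : ℚ) - q) * (k - q) + 1 + q * ((k : ℚ) ^ 2 - 1) / n) / k ^ 2 := by
    have h₁ : 0 < ((n : ℚ) - q) * (k - q) := mul_pos (by linarith) (by linarith)
    have h₂ : 0 ≤ (q : ℚ) * ((k : ℚ) ^ 2 - 1) / n :=
      div_nonneg (mul_nonneg (by linarith) (by nlinarith)) hn.le
    positivity
  linarith

/-- Lemma lemka2: if 1 ≤ q ≤ k-1, k < n and ka = n - k + (k²-1)/n, then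
(n - q(a+1))² + 4q(k-q) < (n - qn/k + q(k²-1)/(kn) + 2/k)². -/
theorem stmt_3 (q k n a : ℤ) (hq : 1 ≤ q) (hqk : q ≤ k - 1) (hkn : k < n) (ha : 0 < a)
    (hka : (k : ℚ) * a = (n : ℚ) - k + ((k : ℚ) ^ 2 - 1) / n) :
    ((n : ℚ) - q * (a + 1)) ^ 2 + 4 * q * (k - q) <
      ((n : ℚ) - q * n / k + q * ((k : ℚ) ^ 2 - 1) / (k * n) + 2 / k) ^ 2 :=
  stmt_3_general q k n a hq hqk hkn hka
end

section
/- Let n, d, k be integers with 0 < k < n and write d = na - t (0 ≤ t < n), ka = l(n-k) + t + m (0 ≤ m < n-k). Consider a critical data set with k₂ = 0, n₂ = 1, n₁ = n - 1, d₂ = a + e, d₁ = d - d₂, k₁ = k, where e is an integer with 0 < e < l. Then C₁₂ := -n₁n₂ - d₂n₁ + d₁n₂ + k₁(d₂ + n₂ - k₂) = (l - e - 1)(n-k) + m + 1 > 0 and C₂₁ := -n₁n₂ + d₂n₁ - d₁n₂ + k₂(d₁ + n₁ - k₁) = -(n-1) + ne + t > 0. -/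
/-!
Substituting `n₂ = 1`, `k₂ = 0`, `d₂ = a + e` and `d = na - t` makes `C₂₁` equal to `n(e - 1) + 1 + t`
outright, while `C₁₂` becomes `ka - (e + 1)(n - k) - t + 1`, which the division
`ka = l(n - k) + t + m` turns into `(l - e - 1)(n - k) + m + 1`. Positivity then comes from
`e < l`, `k < n` and `m, t ≥ 0`, resp. from `e ≥ 1` and `n > t ≥ 0`.
-/

def crossC₁₂ (n₁ n₂ d₁ d₂ k₁ k₂ : ℤ) : ℤ := -n₁ * n₂ - d₂ * n₁ + d₁ * n₂ + k₁ * (d₂ + n₂ - k₂)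

def crossC₂₁ (n₁ n₂ d₁ d₂ k₁ k₂ : ℤ) : ℤ := -n₁ * n₂ + d₂ * n₁ - d₁ * n₂ + k₂ * (d₁ + n₁ - k₁)

section CriticalData

variable {n d k a t l m e : ℤ}

theorem crossC₁₂_eq (hd : d = n * a - t) (hka : k * a = l * (n - k) + t + m) :
    crossC₁₂ (n - 1) 1 (d - (a + e)) (a + e) k 0 = (l - e - 1) * (n - k) + m + 1 := by
  subst hd
  unfold crossC₁₂
  linear_combination hka

theorem crossC₂₁_eq (hd : d = n * a - t) :
    crossC₂₁ (n - 1) 1 (d - (a + e)) (a + e) k 0 = -(n - 1) + n * e + t := by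
  subst hd
  unfold crossC₂₁
  ring

theorem crossC₁₂_pos (hd : d = n * a - t) (hka : k * a = l * (n - k) + t + m) (hkn : k < n)
    (hm0 : 0 ≤ m) (hel : e < l) :
    0 < crossC₁₂ (n - 1) 1 (d - (a + e)) (a + e) k 0 := by
  have : 0 ≤ (l - e - 1) * (n - k) := mul_nonneg (by omega) (by omega)
  rw [crossC₁₂_eq hd hka]
  omega

theorem crossC₂₁_pos (hd : d = n * a - t) (ht0 : 0 ≤ t) (htn : t < n) (he0 : 0 < e) :
    0 < crossC₂₁ (n - 1) 1 (d - (a + e)) (a + e) k 0 := by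
  have : 0 ≤ n * (e - 1) := mul_nonneg (by omega) (by omega)
  rw [crossC₂₁_eq hd]
  linarith

end CriticalData

theorem stmt_5_general (n d k a t l m e : ℤ) (hkn : k < n)
    (hd : d = n * a - t) (ht0 : 0 ≤ t) (htn : t < n)
    (hka : k * a = l * (n - k) + t + m) (hm0 : 0 ≤ m)
    (he0 : 0 < e) (hel : e < l)
    (n₁ n₂ d₁ d₂ k₁ k₂ : ℤ)
    (hk₂ : k₂ = 0) (hn₂ : n₂ = 1) (hn₁ : n₁ = n - 1)
    (hd₂ : d₂ = a + e) (hd₁ : d₁ = d - d₂) (hk₁ : k₁ = k) :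
    (-n₁ * n₂ - d₂ * n₁ + d₁ * n₂ + k₁ * (d₂ + n₂ - k₂) = (l - e - 1) * (n - k) + m + 1 ∧
      0 < -n₁ * n₂ - d₂ * n₁ + d₁ * n₂ + k₁ * (d₂ + n₂ - k₂)) ∧
    (-n₁ * n₂ + d₂ * n₁ - d₁ * n₂ + k₂ * (d₁ + n₁ - k₁) = -(n - 1) + n * e + t ∧
      0 < -n₁ * n₂ + d₂ * n₁ - d₁ * n₂ + k₂ * (d₁ + n₁ - k₁)) := by
  subst n₁ n₂ d₁ d₂ k₁ k₂
  exact ⟨⟨crossC₁₂_eq hd hka, crossC₁₂_pos hd hka hkn hm0 hel⟩,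
    ⟨crossC₂₁_eq hd, crossC₂₁_pos hd ht0 htn he0⟩⟩

/-- Proposition 5.1: for a critical data set with k₂ = 0, n₂ = 1,
C₁₂ = (l-e-1)(n-k) + m + 1 > 0 and C₂₁ = -(n-1) + ne + t > 0. -/
theorem stmt_5 (n d k a t l m e : ℤ) (hk : 0 < k) (hkn : k < n)
    (hd : d = n * a - t) (ht0 : 0 ≤ t) (htn : t < n)
    (hka : k * a = l * (n - k) + t + m) (hm0 : 0 ≤ m) (hmn : m < n - k)
    (he0 : 0 < e) (hel : e < l)
    (n₁ n₂ d₁ d₂ k₁ k₂ : ℤ)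
    (hk₂ : k₂ = 0) (hn₂ : n₂ = 1) (hn₁ : n₁ = n - 1)
    (hd₂ : d₂ = a + e) (hd₁ : d₁ = d - d₂) (hk₁ : k₁ = k) :
    (-n₁ * n₂ - d₂ * n₁ + d₁ * n₂ + k₁ * (d₂ + n₂ - k₂) = (l - e - 1) * (n - k) + m + 1 ∧
      0 < -n₁ * n₂ - d₂ * n₁ + d₁ * n₂ + k₁ * (d₂ + n₂ - k₂)) ∧
    (-n₁ * n₂ + d₂ * n₁ - d₁ * n₂ + k₂ * (d₁ + n₁ - k₁) = -(n - 1) + n * e + t ∧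
      0 < -n₁ * n₂ + d₂ * n₁ - d₁ * n₂ + k₂ * (d₁ + n₁ - k₁)) :=
  stmt_5_general n d k a t l m e hkn hd ht0 htn hka hm0 he0 hel n₁ n₂ d₁ d₂ k₁ k₂ hk₂ hn₂ hn₁ hd₂
    hd₁ hk₁
end

section
/- Let n, n₁, n₂, k₁, k₂, e, t, a be integers with n = n₁+n₂, k₂ ≥ 2, e ≥ 1, t ≥ 0, n₂ > k₂ ≥ 1, n ≥ k₂(k₁+1), and k₂(a+1) - n₂ ≥ (k₂² - 1 - k₂e)/n₂ (the Brill-Noether bound for (n₂, n₂a+e, k₂)). Then C₂₁ = n₁(k₂(a+1) - n₂) + e(n-k₂) + t(n₂-k₂) - k₁k₂ > 0. -/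
/-!
Multiplying by `n₂ > 0` and inserting the Brill–Noether bound `n₂ (k₂(a+1) - n₂) ≥ k₂² - 1 - k₂e`
gives `n₂ C₂₁ ≥ (n₂ - k₂)(ne + n₂t) + n₁(k₂² - 1) - n₂k₁k₂`. Using `e ≥ 1` and `t ≥ 0`, the right
side is at least `n₂(n - k₂(k₁ + 1)) + n₁(k₂² - k₂ - 1)`, which is positive because
`n ≥ k₂(k₁ + 1)` and `k₂ ≥ 2`.
-/

lemma Int.le_mul_of_cast_div_le {x y d : ℤ} (hd : 0 < d) (h : (x : ℚ) / d ≤ y) : x ≤ d * y := by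
  rw [div_le_iff₀ (by exact_mod_cast hd)] at h
  rw [mul_comm]
  exact_mod_cast h

def C₂₁ (n n₁ n₂ k₁ k₂ e t a : ℤ) : ℤ :=
  n₁ * (k₂ * (a + 1) - n₂) + e * (n - k₂) + t * (n₂ - k₂) - k₁ * k₂

section C₂₁

variable {n n₁ n₂ k₁ k₂ e t a : ℤ}

lemma le_mul_C₂₁_of_brillNoether (hn : n = n₁ + n₂) (hn₁ : 0 ≤ n₁)
    (hbn : k₂ ^ 2 - 1 - k₂ * e ≤ n₂ * (k₂ * (a + 1) - n₂)) :
    (n₂ - k₂) * (n * e + n₂ * t) + n₁ * (k₂ ^ 2 - 1) - n₂ * k₁ * k₂ ≤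
      n₂ * C₂₁ n n₁ n₂ k₁ k₂ e t a := by
  have := mul_le_mul_of_nonneg_left hbn hn₁
  subst hn
  unfold C₂₁
  linarith

lemma le_C₂₁_bound_of_one_le (hn : n = n₁ + n₂) (hn0 : 0 ≤ n) (hn₂ : 0 ≤ n₂) (he : 1 ≤ e)
    (ht : 0 ≤ t) (hk₂n₂ : k₂ ≤ n₂) :
    n₂ * (n - k₂ * (k₁ + 1)) + n₁ * (k₂ ^ 2 - k₂ - 1) ≤
      (n₂ - k₂) * (n * e + n₂ * t) + n₁ * (k₂ ^ 2 - 1) - n₂ * k₁ * k₂ := by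
  have hne : n ≤ n * e := le_mul_of_one_le_right hn0 he
  have hn₂t : 0 ≤ n₂ * t := mul_nonneg hn₂ ht
  have := mul_le_mul_of_nonneg_left (add_le_add hne hn₂t) (sub_nonneg.2 hk₂n₂)
  subst hn
  linarith

end C₂₁

theorem stmt_18_general (n n₁ n₂ k₁ k₂ e t a : ℤ) (hn : n = n₁ + n₂) (hn₁ : 1 ≤ n₁)
    (hk₂2 : 2 ≤ k₂) (he : 1 ≤ e) (ht : 0 ≤ t) (hk₂n₂ : k₂ < n₂)
    (hnk : k₂ * (k₁ + 1) ≤ n)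
    (hbn : ((k₂ : ℚ) ^ 2 - 1 - k₂ * e) / n₂ ≤ ((k₂ * (a + 1) - n₂ : ℤ) : ℚ)) :
    0 < n₁ * (k₂ * (a + 1) - n₂) + e * (n - k₂) + t * (n₂ - k₂) - k₁ * k₂ := by
  have hn₂ : 0 < n₂ := by linarith
  have hbn' := Int.le_mul_of_cast_div_le (x := k₂ ^ 2 - 1 - k₂ * e) hn₂ (by exact_mod_cast hbn)
  have hpos : 0 < n₂ * (n - k₂ * (k₁ + 1)) + n₁ * (k₂ ^ 2 - k₂ - 1) :=
    add_pos_of_nonneg_of_pos (mul_nonneg hn₂.le (sub_nonneg.2 hnk))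
      (mul_pos (by linarith) (by nlinarith))
  show 0 < C₂₁ n n₁ n₂ k₁ k₂ e t a
  refine pos_of_mul_pos_right (a := n₂) ?_ hn₂.le
  calc 0 < _ := hpos
    _ ≤ _ := le_C₂₁_bound_of_one_le hn (by linarith) hn₂.le he ht hk₂n₂.le
    _ ≤ n₂ * C₂₁ n n₁ n₂ k₁ k₂ e t a := le_mul_C₂₁_of_brillNoether hn (by linarith) hbn'

/-- case (i) of Lemma 5.6: if k₂ ≥ 2, e ≥ 1, t ≥ 0, n₂ > k₂,
n ≥ k₂(k₁+1) and the Brill-Noether bound holds, then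
C₂₁ = n₁(k₂(a+1)-n₂) + e(n-k₂) + t(n₂-k₂) - k₁k₂ > 0. -/
theorem stmt_18 (n n₁ n₂ k₁ k₂ e t a : ℤ) (hn : n = n₁ + n₂) (hn₁ : 1 ≤ n₁)
    (hk₂2 : 2 ≤ k₂) (he : 1 ≤ e) (ht : 0 ≤ t) (hk₂n₂ : k₂ < n₂) (hk₂1 : 1 ≤ k₂)
    (hnk : k₂ * (k₁ + 1) ≤ n)
    (hbn : ((k₂ : ℚ) ^ 2 - 1 - k₂ * e) / n₂ ≤ ((k₂ * (a + 1) - n₂ : ℤ) : ℚ)) :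
    0 < n₁ * (k₂ * (a + 1) - n₂) + e * (n - k₂) + t * (n₂ - k₂) - k₁ * k₂ :=
  stmt_18_general n n₁ n₂ k₁ k₂ e t a hn hn₁ hk₂2 he ht hk₂n₂ hnk hbn
end
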